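/- If U contains elements u, v, w that are pairwise non-±-equal (u ≠ ±v, u ≠ ±w, v ≠ ±w), then R(U) equals the set of finite integer linear combinations of monomials of U. -/

import Mathlib

/-! The bracket `[x, y] = x conj y - y conj x` vanishes exactly when `x` and `y` are real
multiples of each other, and for `[α, β] ≠ 0` a point `z` is determined by `[α, z]` and
`[β, z]`. Bracketing the intersection formula gives
`[γ, I_{α,β}(0, z)] = [β, z] / [β, α] · [γ, α]`, so `z ↦ I_{α,β}(0, z)` is additive and
`I_{α,β}(p, q) = I_{β,α}(0, p) + I_{α,β}(0, q)`. Hence every point of `R(U)` is an integer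
combination of monomials, starting from `1 = I_{v,u}(0, 1) + I_{u,v}(0, 1)`. Conversely,
three pairwise independent directions `u, v, w` give explicit intersection constructions of
`p + q` and `-p` from `p` and `q`, so `R(U)` is an additive group, and it contains every
monomial. -/

open Complex

/-- The bracket `[x,y] = x * conj y - y * conj x`. -/
noncomputable def brkt (x y : ℂ) : ℂ := x * (starRingEnd ℂ) y - y * (starRingEnd ℂ) x

/-- `lineInt α β p q` is the intersection point `I_{α,β}(p,q)` of the line through `p`
with direction `α` and the line through `q` with direction `β` (for unit `α ≠ ±β`),
given by the formula of Buhler et al. -/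
noncomputable def lineInt (α β p q : ℂ) : ℂ :=
  brkt α p / brkt α β * β + brkt β q / brkt β α * α

/-- The sets `S n` in the inductive construction. -/
def stepSet (U : Set ℂ) : ℕ → Set ℂ
  | 0 => {0, 1}
  | n + 1 => {z | ∃ α ∈ U, ∃ β ∈ U, α ≠ β ∧ α ≠ -β ∧
      ∃ p ∈ stepSet U n, ∃ q ∈ stepSet U n, z = lineInt α β p q}

/-- `RU U = ⋃ n, S n`. -/
def RU (U : Set ℂ) : Set ℂ := ⋃ n, stepSet U n

/-- Elementary monomials of `U`. -/
def IsElem (U : Set ℂ) (z : ℂ) : Prop :=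
  ∃ α ∈ U, ∃ β ∈ U, α ≠ β ∧ α ≠ -β ∧ z = lineInt α β 0 1

/-- Monomials of `U`, defined inductively. -/
inductive IsMonomial (U : Set ℂ) : ℂ → Prop
  | elementary (α β : ℂ) (hα : α ∈ U) (hβ : β ∈ U) (h1 : α ≠ β) (h2 : α ≠ -β) :
      IsMonomial U (lineInt α β 0 1)
  | step (α β m : ℂ) (hα : α ∈ U) (hβ : β ∈ U) (h1 : α ≠ β) (h2 : α ≠ -β)
      (hm : IsMonomial U m) : IsMonomial U (lineInt α β 0 m)

/-- `P`: the real numbers arising as length-two monomials `I_{γ,δ}(0,z)` on the real axis. -/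
def projSet (U : Set ℂ) : Set ℝ :=
  {r | ∃ γ ∈ U, ∃ δ ∈ U, γ ≠ δ ∧ γ ≠ -δ ∧ ∃ z, IsElem U z ∧ (r : ℂ) = lineInt γ δ 0 z}

/-- `m` is a `ℤ[P]`-linear combination of elementary monomials of `U`. -/
def IsZPComb (U : Set ℂ) (m : ℂ) : Prop :=
  ∃ (n : ℕ) (c : Fin n → ℝ) (z : Fin n → ℂ),
    (∀ i, c i ∈ Subring.closure (projSet U)) ∧ (∀ i, IsElem U (z i)) ∧
    m = ∑ i, (c i : ℂ) * z i

open ComplexConjugate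

lemma conj_brkt (x y : ℂ) : conj (brkt x y) = -brkt x y := by
  simp only [brkt, map_sub, map_mul, conj_conj]; ring

lemma brkt_comm (x y : ℂ) : brkt y x = -brkt x y := by simp only [brkt]; ring

@[simp] lemma brkt_self (x : ℂ) : brkt x x = 0 := by simp [brkt]

@[simp] lemma brkt_zero_right (x : ℂ) : brkt x 0 = 0 := by simp [brkt]

lemma brkt_add_right (x a b : ℂ) : brkt x (a + b) = brkt x a + brkt x b := by
  simp only [brkt, map_add]; ring

lemma brkt_neg_right (x y : ℂ) : brkt x (-y) = -brkt x y := by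
  simp only [brkt, map_neg]; ring

lemma brkt_mul_right_of_conj_eq (x y : ℂ) {c : ℂ} (hc : conj c = c) :
    brkt x (c * y) = c * brkt x y := by
  simp only [brkt, map_mul, hc]; ring

lemma conj_brkt_div_brkt (a b c d : ℂ) : conj (brkt a b / brkt c d) = brkt a b / brkt c d := by
  rw [map_div₀, conj_brkt, conj_brkt, neg_div_neg_eq]

lemma brkt_ne_zero_comm {x y : ℂ} (h : brkt x y ≠ 0) : brkt y x ≠ 0 := by
  rwa [brkt_comm, neg_ne_zero]

lemma brkt_mul_sub_brkt_mul (u v z : ℂ) : brkt u z * v - brkt v z * u = brkt u v * z := by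
  simp only [brkt]; ring

lemma eq_of_brkt_eq {u v x y : ℂ} (huv : brkt u v ≠ 0)
    (hu : brkt u x = brkt u y) (hv : brkt v x = brkt v y) : x = y := by
  apply mul_left_cancel₀ huv
  rw [← brkt_mul_sub_brkt_mul u v x, ← brkt_mul_sub_brkt_mul u v y, hu, hv]

lemma brkt_mul_brkt_cyclic (u v w p : ℂ) :
    brkt v w * brkt u p = brkt v p * brkt u w - brkt w p * brkt u v := by
  simp only [brkt]; ring

lemma ne_of_brkt_ne_zero {x y : ℂ} (h : brkt x y ≠ 0) : x ≠ y := by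
  rintro rfl; exact h (brkt_self x)

lemma ne_neg_of_brkt_ne_zero {x y : ℂ} (h : brkt x y ≠ 0) : x ≠ -y := by
  rintro rfl; exact h (by simp only [brkt, map_neg]; ring)

lemma brkt_ne_zero {x y : ℂ} (hx : ‖x‖ = 1) (hy : ‖y‖ = 1) (hxy : x ≠ y)
    (hxy' : x ≠ -y) :
    brkt x y ≠ 0 := by
  intro h
  have hxx : x * conj x = 1 := by rw [mul_conj, normSq_eq_norm_sq, hx]; norm_num
  have hyy : conj y * y = 1 := by rw [mul_comm, mul_conj, normSq_eq_norm_sq, hy]; norm_num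
  have hsym : x * conj y = y * conj x := sub_eq_zero.mp h
  have hsq : (x * conj y) ^ 2 = 1 := by
    calc (x * conj y) ^ 2 = (x * conj y) * (y * conj x) := by rw [← hsym, sq]
      _ = (x * conj x) * (conj y * y) := by ring
      _ = 1 := by rw [hxx, hyy, one_mul]
  have hx_eq : x = x * conj y * y := by rw [mul_assoc, hyy, mul_one]
  rcases sq_eq_one_iff.mp hsq with h1 | h1
  · exact hxy (by rw [hx_eq, h1, one_mul])
  · exact hxy' (by rw [hx_eq, h1, neg_one_mul])

section LineInt

lemma brkt_lineInt (γ α β p q : ℂ) :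
    brkt γ (lineInt α β p q) =
      brkt α p / brkt α β * brkt γ β + brkt β q / brkt β α * brkt γ α := by
  rw [lineInt, brkt_add_right, brkt_mul_right_of_conj_eq _ _ (conj_brkt_div_brkt _ _ _ _),
    brkt_mul_right_of_conj_eq _ _ (conj_brkt_div_brkt _ _ _ _)]

lemma brkt_lineInt_left {α β : ℂ} (h : brkt α β ≠ 0) (p q : ℂ) :
    brkt α (lineInt α β p q) = brkt α p := by
  rw [brkt_lineInt, brkt_self, mul_zero, add_zero, div_mul_cancel₀ _ h]

lemma brkt_lineInt_right {α β : ℂ} (h : brkt α β ≠ 0) (p q : ℂ) :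
    brkt β (lineInt α β p q) = brkt β q := by
  rw [brkt_lineInt, brkt_self, mul_zero, zero_add, div_mul_cancel₀ _ (brkt_ne_zero_comm h)]

lemma brkt_lineInt_zero (γ α β p : ℂ) :
    brkt γ (lineInt α β 0 p) = brkt β p / brkt β α * brkt γ α := by
  rw [brkt_lineInt, brkt_zero_right, zero_div, zero_mul, zero_add]

lemma lineInt_self {α β : ℂ} (h : brkt α β ≠ 0) (p : ℂ) : lineInt α β p p = p :=
  eq_of_brkt_eq h (brkt_lineInt_left h p p) (brkt_lineInt_right h p p)

lemma lineInt_eq_add (α β p q : ℂ) :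
    lineInt α β p q = lineInt β α 0 p + lineInt α β 0 q := by
  simp [lineInt]

@[simp] lemma lineInt_zero_zero (α β : ℂ) : lineInt α β 0 0 = 0 := by simp [lineInt]

lemma lineInt_zero_add (α β x y : ℂ) :
    lineInt α β 0 (x + y) = lineInt α β 0 x + lineInt α β 0 y := by
  simp only [lineInt, brkt_zero_right, brkt_add_right]; ring

lemma lineInt_zero_neg (α β x : ℂ) : lineInt α β 0 (-x) = -lineInt α β 0 x := by
  simp only [lineInt, brkt_zero_right, brkt_neg_right]; ring

variable {u v w : ℂ}

lemma brkt_lineInt_neg_half (huv : brkt u v ≠ 0) (huw : brkt u w ≠ 0) (hvw : brkt v w ≠ 0)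
    (p : ℂ) :
    brkt u (lineInt w v (lineInt u v 0 p) (lineInt u w 0 p)) = -brkt u p := by
  rw [brkt_lineInt, brkt_lineInt_zero, brkt_lineInt_zero, brkt_comm u v, brkt_comm u w,
    brkt_comm v w]
  field_simp
  linear_combination brkt_mul_brkt_cyclic u v w p

lemma brkt_lineInt_add_half (huv : brkt u v ≠ 0) (huw : brkt u w ≠ 0) (hvw : brkt v w ≠ 0)
    (p q : ℂ) :
    brkt v (lineInt w u (lineInt u v 0 p) (lineInt w v 0 q)) = brkt v p + brkt v q := by
  rw [brkt_lineInt, brkt_lineInt_zero, brkt_lineInt_zero, brkt_comm u v, brkt_comm u w]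
  field_simp

lemma neg_eq_lineInt (huv : brkt u v ≠ 0) (huw : brkt u w ≠ 0) (hvw : brkt v w ≠ 0)
    (p : ℂ) :
    -p = lineInt u v (lineInt w v (lineInt u v 0 p) (lineInt u w 0 p))
      (lineInt w u (lineInt v u 0 p) (lineInt v w 0 p)) := by
  refine eq_of_brkt_eq huv ?_ ?_
  · rw [brkt_lineInt_left huv, brkt_lineInt_neg_half huv huw hvw, brkt_neg_right]
  · rw [brkt_lineInt_right huv, brkt_neg_right,
      brkt_lineInt_neg_half (brkt_ne_zero_comm huv) hvw huw]

lemma add_eq_lineInt (huv : brkt u v ≠ 0) (huw : brkt u w ≠ 0) (hvw : brkt v w ≠ 0)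
    (p q : ℂ) :
    p + q = lineInt v w (lineInt w u (lineInt u v 0 p) (lineInt w v 0 q))
      (lineInt v u (lineInt u w 0 p) (lineInt v w 0 q)) := by
  refine eq_of_brkt_eq hvw ?_ ?_
  · rw [brkt_lineInt_left hvw, brkt_lineInt_add_half huv huw hvw, brkt_add_right]
  · rw [brkt_lineInt_right hvw, brkt_add_right,
      brkt_lineInt_add_half huw huv (brkt_ne_zero_comm hvw)]

end LineInt

section Constructible

variable {U : Set ℂ}

lemma zero_mem_RU : (0 : ℂ) ∈ RU U := Set.mem_iUnion.mpr ⟨0, Or.inl rfl⟩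

lemma one_mem_RU : (1 : ℂ) ∈ RU U := Set.mem_iUnion.mpr ⟨0, Or.inr rfl⟩

lemma lineInt_mem_stepSet_succ {α β : ℂ} (hα : α ∈ U) (hβ : β ∈ U)
    (h : brkt α β ≠ 0) {n : ℕ} {p q : ℂ} (hp : p ∈ stepSet U n) (hq : q ∈ stepSet U n) :
    lineInt α β p q ∈ stepSet U (n + 1) :=
  ⟨α, hα, β, hβ, ne_of_brkt_ne_zero h, ne_neg_of_brkt_ne_zero h, p, hp, q, hq, rfl⟩

lemma stepSet_mono {α β : ℂ} (hα : α ∈ U) (hβ : β ∈ U) (h : brkt α β ≠ 0) :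
    Monotone (stepSet U) :=
  monotone_nat_of_le_succ fun _ z hz =>
    lineInt_self h z ▸ lineInt_mem_stepSet_succ hα hβ h hz hz

lemma lineInt_mem_RU {α β : ℂ} (hα : α ∈ U) (hβ : β ∈ U) (h : brkt α β ≠ 0)
    {p q : ℂ} (hp : p ∈ RU U) (hq : q ∈ RU U) : lineInt α β p q ∈ RU U := by
  obtain ⟨m, hm⟩ := Set.mem_iUnion.mp hp
  obtain ⟨n, hn⟩ := Set.mem_iUnion.mp hq
  have hmono := stepSet_mono hα hβ h
  exact Set.mem_iUnion.mpr ⟨max m n + 1, lineInt_mem_stepSet_succ hα hβ h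
    (hmono (le_max_left m n) hm) (hmono (le_max_right m n) hn)⟩

variable {u v w : ℂ}

lemma add_mem_RU (hu : u ∈ U) (hv : v ∈ U) (hw : w ∈ U)
    (huv : brkt u v ≠ 0) (huw : brkt u w ≠ 0) (hvw : brkt v w ≠ 0)
    {p q : ℂ} (hp : p ∈ RU U) (hq : q ∈ RU U) : p + q ∈ RU U := by
  have hvu := brkt_ne_zero_comm huv
  have hwu := brkt_ne_zero_comm huw
  have hwv := brkt_ne_zero_comm hvw
  have h0 : (0 : ℂ) ∈ RU U := zero_mem_RU
  rw [add_eq_lineInt huv huw hvw p q]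
  exact lineInt_mem_RU hv hw hvw
    (lineInt_mem_RU hw hu hwu (lineInt_mem_RU hu hv huv h0 hp) (lineInt_mem_RU hw hv hwv h0 hq))
    (lineInt_mem_RU hv hu hvu (lineInt_mem_RU hu hw huw h0 hp) (lineInt_mem_RU hv hw hvw h0 hq))

lemma neg_mem_RU (hu : u ∈ U) (hv : v ∈ U) (hw : w ∈ U)
    (huv : brkt u v ≠ 0) (huw : brkt u w ≠ 0) (hvw : brkt v w ≠ 0)
    {p : ℂ} (hp : p ∈ RU U) : -p ∈ RU U := by
  have hvu := brkt_ne_zero_comm huv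
  have hwu := brkt_ne_zero_comm huw
  have hwv := brkt_ne_zero_comm hvw
  have h0 : (0 : ℂ) ∈ RU U := zero_mem_RU
  rw [neg_eq_lineInt huv huw hvw p]
  exact lineInt_mem_RU hu hv huv
    (lineInt_mem_RU hw hv hwv (lineInt_mem_RU hu hv huv h0 hp) (lineInt_mem_RU hu hw huw h0 hp))
    (lineInt_mem_RU hw hu hwu (lineInt_mem_RU hv hu hvu h0 hp) (lineInt_mem_RU hv hw hvw h0 hp))

lemma IsMonomial.mem_RU (hU : ∀ z ∈ U, ‖z‖ = 1) {m : ℂ} (hm : IsMonomial U m) :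
    m ∈ RU U := by
  induction hm with
  | elementary α β hα hβ h1 h2 =>
    exact lineInt_mem_RU hα hβ (brkt_ne_zero (hU α hα) (hU β hβ) h1 h2) zero_mem_RU one_mem_RU
  | step α β m hα hβ h1 h2 _ ih =>
    exact lineInt_mem_RU hα hβ (brkt_ne_zero (hU α hα) (hU β hβ) h1 h2) zero_mem_RU ih

lemma lineInt_zero_mem_closure {α β : ℂ} (hα : α ∈ U) (hβ : β ∈ U) (h1 : α ≠ β)
    (h2 : α ≠ -β) {x : ℂ} (hx : x ∈ AddSubgroup.closure {z | IsMonomial U z}) :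
    lineInt α β 0 x ∈ AddSubgroup.closure {z | IsMonomial U z} := by
  induction hx using AddSubgroup.closure_induction with
  | mem m hm => exact AddSubgroup.subset_closure (IsMonomial.step α β m hα hβ h1 h2 hm)
  | zero => rw [lineInt_zero_zero]; exact zero_mem _
  | add a b _ _ ha hb => rw [lineInt_zero_add]; exact add_mem ha hb
  | neg a _ ha => rw [lineInt_zero_neg]; exact neg_mem ha

lemma RU_subset_closure (hu : u ∈ U) (hv : v ∈ U) (huv : brkt u v ≠ 0) :
    RU U ⊆ AddSubgroup.closure {z | IsMonomial U z} := by
  refine Set.iUnion_subset fun n => ?_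
  induction n with
  | zero =>
    rintro z (rfl | rfl)
    · exact zero_mem _
    · rw [← lineInt_self huv 1, lineInt_eq_add]
      exact add_mem
        (AddSubgroup.subset_closure (IsMonomial.elementary v u hv hu
          (ne_of_brkt_ne_zero (brkt_ne_zero_comm huv))
          (ne_neg_of_brkt_ne_zero (brkt_ne_zero_comm huv))))
        (AddSubgroup.subset_closure (IsMonomial.elementary u v hu hv
          (ne_of_brkt_ne_zero huv) (ne_neg_of_brkt_ne_zero huv)))
  | succ n ih =>
    rintro _ ⟨α, hα, β, hβ, h1, h2, p, hp, q, hq, rfl⟩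
    rw [lineInt_eq_add]
    have h2' : β ≠ -α := fun h => h2 (neg_eq_iff_eq_neg.mp h.symm)
    exact add_mem (lineInt_zero_mem_closure hβ hα h1.symm h2' (ih hp))
      (lineInt_zero_mem_closure hα hβ h1 h2 (ih hq))

lemma closure_subset_RU (hU : ∀ z ∈ U, ‖z‖ = 1) (hu : u ∈ U) (hv : v ∈ U) (hw : w ∈ U)
    (huv : brkt u v ≠ 0) (huw : brkt u w ≠ 0) (hvw : brkt v w ≠ 0) :
    (AddSubgroup.closure {z | IsMonomial U z} : Set ℂ) ⊆ RU U := by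
  intro x hx
  induction hx using AddSubgroup.closure_induction with
  | mem m hm => exact hm.mem_RU hU
  | zero => exact zero_mem_RU
  | add a b _ _ ha hb => exact add_mem_RU hu hv hw huv huw hvw ha hb
  | neg a _ ha => exact neg_mem_RU hu hv hw huv huw hvw ha

end Constructible

lemma AddSubgroup.mem_closure_iff_exists_int_sum {R : Type*} [Ring R] {s : Set R} {m : R} :
    m ∈ AddSubgroup.closure s ↔
      ∃ (n : ℕ) (c : Fin n → ℤ) (z : Fin n → R),
        (∀ i, z i ∈ s) ∧ m = ∑ i, (c i : R) * z i := by
  rw [← Submodule.span_int_eq_addSubgroupClosure, Submodule.mem_toAddSubgroup,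
    Submodule.mem_span_set']
  constructor
  · rintro ⟨n, c, z, rfl⟩
    exact ⟨n, c, fun i => z i, fun i => (z i).2, by simp only [zsmul_eq_mul]⟩
  · rintro ⟨n, c, z, hz, rfl⟩
    exact ⟨n, c, fun i => ⟨z i, hz i⟩, by simp only [zsmul_eq_mul]⟩

/-- if `U` contains three pairwise non-±-equal elements, then `R(U)` is the
set of finite integer linear combinations of monomials of `U`. -/
theorem stmt3 (U : Set ℂ) (hU : ∀ z ∈ U, ‖z‖ = 1)
    (u v w : ℂ) (hu : u ∈ U) (hv : v ∈ U) (hw : w ∈ U)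
    (huv : u ≠ v) (huv' : u ≠ -v) (huw : u ≠ w) (huw' : u ≠ -w)
    (hvw : v ≠ w) (hvw' : v ≠ -w) :
    RU U = {m | ∃ (n : ℕ) (c : Fin n → ℤ) (z : Fin n → ℂ),
      (∀ i, IsMonomial U (z i)) ∧ m = ∑ i, (c i : ℂ) * z i} := by
  have buv := brkt_ne_zero (hU u hu) (hU v hv) huv huv'
  have buw := brkt_ne_zero (hU u hu) (hU w hw) huw huw'
  have bvw := brkt_ne_zero (hU v hv) (hU w hw) hvw hvw'
  have hRU : RU U = AddSubgroup.closure {z | IsMonomial U z} :=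
    (RU_subset_closure hu hv buv).antisymm (closure_subset_RU hU hu hv hw buv buw bvw)
  ext m
  rw [hRU, SetLike.mem_coe, AddSubgroup.mem_closure_iff_exists_int_sum]
  rfl
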